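/- In the tie-block (total preorder, transitive ties) setting with blocks of sizes t₁,…,t_G summing to n, define p_W = (1/(n(n-1)))∑_g t_g L_g, p_T = (1/(n(n-1)))∑_g t_g(t_g-1), p_WW = (1/(n(n-1)(n-2)))∑_g t_g L_g(L_g-1), p_WT = (1/(n(n-1)(n-2)))∑_g t_g L_g(t_g-1), p_TT = (1/(n(n-1)(n-2)))∑_g t_g(t_g-1)(t_g-2), where L_g = ∑_{h<g} t_h. Then 1 + (n-1)(3p_W + (5/4)p_T) + (n-1)(n-2)(p_WW + p_WT + (1/4)p_TT) = (1/n)·∑_{g=1}^G t_g r_g², where r_g = 1 + L_g + (t_g-1)/2 is the midrank of block g. -/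
import Mathlib


open Finset

/-- Collapse of the composite-endpoint second-moment formula under transitive ties:
with tie blocks of sizes `t g` summing to `n`, `L g = ∑_{h<g} t h`, midranks
`r g = 1 + L g + (t g − 1)/2`, and the comparison probabilities
`p_W, p_T, p_WW, p_WT, p_TT` defined from the block structure, the general formula
`1 + (n−1)(3p_W + (5/4)p_T) + (n−1)(n−2)(p_WW + p_WT + (1/4)p_TT)` equals
`(1/n)·∑ g, t g · (r g)²`. -/
theorem composite_second_moment_collapses_to_midrank
    (G n : ℕ) (hn : 3 ≤ n) (t : Fin G → ℕ) (ht : ∀ g, 1 ≤ t g) (hsum : ∑ g, t g = n) :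
    (let L : Fin G → ℝ := fun g => ∑ h ∈ Finset.univ.filter (fun h => h < g), (t h : ℝ)
     let pW : ℝ := (1 / ((n : ℝ) * ((n : ℝ) - 1))) * ∑ g, (t g : ℝ) * L g
     let pT : ℝ := (1 / ((n : ℝ) * ((n : ℝ) - 1))) * ∑ g, (t g : ℝ) * ((t g : ℝ) - 1)
     let pWW : ℝ := (1 / ((n : ℝ) * ((n : ℝ) - 1) * ((n : ℝ) - 2))) *
        ∑ g, (t g : ℝ) * L g * (L g - 1)
     let pWT : ℝ := (1 / ((n : ℝ) * ((n : ℝ) - 1) * ((n : ℝ) - 2))) *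
        ∑ g, (t g : ℝ) * L g * ((t g : ℝ) - 1)
     let pTT : ℝ := (1 / ((n : ℝ) * ((n : ℝ) - 1) * ((n : ℝ) - 2))) *
        ∑ g, (t g : ℝ) * ((t g : ℝ) - 1) * ((t g : ℝ) - 2)
     1 + ((n : ℝ) - 1) * (3 * pW + (5 / 4) * pT)
        + ((n : ℝ) - 1) * ((n : ℝ) - 2) * (pWW + pWT + (1 / 4) * pTT)
      = (1 / (n : ℝ)) * ∑ g, (t g : ℝ) * (1 + L g + ((t g : ℝ) - 1) / 2) ^ 2) := by
  intro L pW pT pWW pWT pTT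
  have h3 : (3:ℝ) ≤ (n:ℝ) := by exact_mod_cast hn
  have hn0 : (n : ℝ) ≠ 0 := by linarith
  have h1 : (n : ℝ) - 1 ≠ 0 := by linarith
  have h2 : (n : ℝ) - 2 ≠ 0 := by linarith
  have hs : (∑ g, (t g : ℝ)) = (n : ℝ) := by exact_mod_cast hsum
  have key : (∑ g, (t g : ℝ) * (1 + L g + ((t g : ℝ) - 1) / 2) ^ 2)
      = (∑ g, (t g : ℝ)) + 3 * (∑ g, (t g : ℝ) * L g)
        + (5/4) * (∑ g, (t g : ℝ) * ((t g : ℝ) - 1))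
        + (∑ g, (t g : ℝ) * L g * (L g - 1))
        + (∑ g, (t g : ℝ) * L g * ((t g : ℝ) - 1))
        + (1/4) * (∑ g, (t g : ℝ) * ((t g : ℝ) - 1) * ((t g : ℝ) - 2)) := by
    simp only [Finset.mul_sum, ← Finset.sum_add_distrib]
    exact Finset.sum_congr rfl fun g _ => by ring
  show 1 + ((n : ℝ) - 1) * (3 * pW + (5 / 4) * pT)
        + ((n : ℝ) - 1) * ((n : ℝ) - 2) * (pWW + pWT + (1 / 4) * pTT)
      = (1 / (n : ℝ)) * ∑ g, (t g : ℝ) * (1 + L g + ((t g : ℝ) - 1) / 2) ^ 2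
  rw [key, hs]
  show 1 + ((n : ℝ) - 1) * (3 * ((1 / ((n : ℝ) * ((n : ℝ) - 1))) * ∑ g, (t g : ℝ) * L g)
        + (5 / 4) * ((1 / ((n : ℝ) * ((n : ℝ) - 1))) * ∑ g, (t g : ℝ) * ((t g : ℝ) - 1)))
      + ((n : ℝ) - 1) * ((n : ℝ) - 2) *
        ((1 / ((n : ℝ) * ((n : ℝ) - 1) * ((n : ℝ) - 2))) * (∑ g, (t g : ℝ) * L g * (L g - 1))
         + (1 / ((n : ℝ) * ((n : ℝ) - 1) * ((n : ℝ) - 2))) * (∑ g, (t g : ℝ) * L g * ((t g : ℝ) - 1))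
         + (1 / 4) * ((1 / ((n : ℝ) * ((n : ℝ) - 1) * ((n : ℝ) - 2))) * (∑ g, (t g : ℝ) * ((t g : ℝ) - 1) * ((t g : ℝ) - 2))))
      = (1 / (n : ℝ)) * ((n : ℝ) + 3 * (∑ g, (t g : ℝ) * L g)
        + (5/4) * (∑ g, (t g : ℝ) * ((t g : ℝ) - 1))
        + (∑ g, (t g : ℝ) * L g * (L g - 1))
        + (∑ g, (t g : ℝ) * L g * ((t g : ℝ) - 1))
        + (1/4) * (∑ g, (t g : ℝ) * ((t g : ℝ) - 1) * ((t g : ℝ) - 2)))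
  field_simp
  ring
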